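/- For every ε with 0 < ε ≤ 1 there exist a real number r > 1 and smooth functions s, c : ℝ → ℝ with the following properties: s(t) = sinh(t) and c(t) = cosh(t) for all t ≤ 1; s(t) = c(t) = e^t/2 for all t ≥ r (so in particular s'(t) = s(t) and c'(t) = c(t) for t ≥ r); s(0) = 0, s'(0) = 1, c(0) = 1, c'(0) = 0; and for all t > 0: s(t) > 0, c(t) > 0, 0 ≤ s''(t) ≤ (1+ε)s(t), 0 ≤ c''(t) ≤ (1+ε)c(t), 0 ≤ s'(t)c'(t) ≤ s(t)c(t), and c'(t)² ≤ c(t)². -/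

import Mathlib

/-!
Take `s = (eᵗ - F(t) e⁻ᵗ) / 2` and `c = (eᵗ + F(t) e⁻ᵗ) / 2`, where the cutoff `F` is `1` on
`(-∞, 1]` (giving `sinh`, `cosh`), `0` on `[r, ∞)` (giving `eᵗ / 2`), decreasing, and has
`|F'|, |F''| ≤ ε`: a smooth transition function stretched over an interval of length `~ 1/ε`.
All derivatives of `s` and `c` again have the form `(eᵗ ± G(t) e⁻ᵗ) / 2` with `G` built from
`F, F', F''`. For `t ≥ 1` we have `4 e⁻ᵗ ≤ eᵗ`, so the error terms `G e⁻ᵗ` are dominated by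
`eᵗ` and the curvature inequalities become elementary estimates.
-/

open Real Filter Set Topology
open scoped ContDiff

/-- The 2-jets `(s, s', s'')`, `(c, c', c'')` of the warping functions at a point `t > 0` at which
the sectional curvatures `-s''/s`, `-c''/c`, `-s'c'/(sc)`, `-c'²/c²` of
`dt² + s² dφ² + c² dσ²` all lie in `[-1-ε, 0]`. -/
def CurvaturePinched (ε s s' s'' c c' c'' : ℝ) : Prop :=
  0 < s ∧ 0 < c ∧ (0 ≤ s'' ∧ s'' ≤ (1 + ε) * s) ∧ (0 ≤ c'' ∧ c'' ≤ (1 + ε) * c) ∧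
    (0 ≤ s' * c' ∧ s' * c' ≤ s * c) ∧ c' ^ 2 ≤ c ^ 2

lemma curvaturePinched_sinh_cosh {ε t : ℝ} (hε : 0 ≤ ε) (ht : 0 < t) :
    CurvaturePinched ε (sinh t) (cosh t) (sinh t) (cosh t) (sinh t) (cosh t) := by
  have hs : 0 < sinh t := sinh_pos_iff.2 ht
  have hc : 0 < cosh t := cosh_pos t
  refine ⟨hs, hc, ⟨hs.le, ?_⟩, ⟨hc.le, ?_⟩, ⟨by positivity, by rw [mul_comm]⟩, ?_⟩
  · nlinarith
  · nlinarith
  · nlinarith [cosh_sq t]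

lemma curvaturePinched_of_four_mul_le {ε x y a b d s s' s'' c c' c'' : ℝ} (hε1 : ε ≤ 1)
    (hy : 0 < y) (hyx : 4 * y ≤ x) (ha : a ∈ Icc 0 1) (hb : b ∈ Icc (-ε) 0) (hd : |d| ≤ ε)
    (hs : s = (x - a * y) / 2) (hs' : s' = (x + (a - b) * y) / 2)
    (hs'' : s'' = (x - (d - 2 * b + a) * y) / 2)
    (hc : c = (x + a * y) / 2) (hc' : c' = (x + (b - a) * y) / 2)
    (hc'' : c'' = (x + (d - 2 * b + a) * y) / 2) :
    CurvaturePinched ε s s' s'' c c' c'' := by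
  obtain ⟨ha0, ha1⟩ := ha
  obtain ⟨hb0, hb1⟩ := hb
  obtain ⟨hd0, hd1⟩ := abs_le.1 hd
  subst hs hs' hs'' hc hc' hc''
  have hε : 0 ≤ ε := by linarith
  refine ⟨?_, ?_, ⟨?_, ?_⟩, ⟨?_, ?_⟩, ⟨?_, ?_⟩, ?_⟩
  · nlinarith [mul_le_mul_of_nonneg_right ha1 hy.le]
  · nlinarith [mul_nonneg ha0 hy.le]
  · nlinarith [mul_le_mul_of_nonneg_right (show d - 2 * b + a ≤ 4 by linarith) hy.le]
  · nlinarith [mul_le_mul_of_nonneg_right (show ε * a - d + 2 * b ≤ 2 * ε by nlinarith) hy.le,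
      mul_le_mul_of_nonneg_left (show 2 * y ≤ x by linarith) hε]
  · nlinarith [mul_le_mul_of_nonneg_right (show -1 ≤ d - 2 * b + a by linarith) hy.le]
  · nlinarith [mul_le_mul_of_nonneg_right (show d - 2 * b - ε * a ≤ 3 * ε by nlinarith) hy.le,
      mul_le_mul_of_nonneg_left (show 3 * y ≤ x by linarith) hε]
  · apply mul_nonneg <;>
      nlinarith [mul_le_mul_of_nonneg_right (show a - b ≤ 2 by linarith) hy.le]
  · have hsq : a ^ 2 ≤ (a - b) ^ 2 := by nlinarith
    nlinarith [mul_le_mul_of_nonneg_right hsq (mul_nonneg hy.le hy.le)]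
  · apply pow_le_pow_left₀ <;> nlinarith [mul_nonneg ha0 hy.le]

namespace Real.smoothTransition

lemma hasCompactSupport_deriv : HasCompactSupport (deriv smoothTransition) := by
  refine HasCompactSupport.intro (isCompact_Icc (a := 0) (b := 1)) fun x hx => ?_
  rcases not_and_or.1 hx with hx | hx
  · have : smoothTransition =ᶠ[𝓝 x] fun _ => 0 := by
      filter_upwards [Iio_mem_nhds (not_le.1 hx)] with y hy using zero_of_nonpos hy.le
    simp [this.deriv_eq]
  · have : smoothTransition =ᶠ[𝓝 x] fun _ => 1 := by
      filter_upwards [Ioi_mem_nhds (not_le.1 hx)] with y hy using one_of_one_le hy.le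
    simp [this.deriv_eq]

lemma exists_abs_deriv_le : ∃ M > 0, ∀ x,
    |deriv smoothTransition x| ≤ M ∧ |deriv (deriv smoothTransition) x| ≤ M := by
  have h₁ : ContDiff ℝ ∞ (deriv smoothTransition) :=
    (contDiff_infty_iff_deriv.1 smoothTransition.contDiff).2
  obtain ⟨M₁, hM₁⟩ := hasCompactSupport_deriv.exists_bound_of_continuous h₁.continuous
  obtain ⟨M₂, hM₂⟩ := hasCompactSupport_deriv.deriv.exists_bound_of_continuous
    (contDiff_infty_iff_deriv.1 h₁).2.continuous
  exact ⟨max 1 (max M₁ M₂), by positivity, fun x =>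
    ⟨(hM₁ x).trans (by simp), (hM₂ x).trans (by simp)⟩⟩

end Real.smoothTransition

structure IsCutoffProfile (ε r : ℝ) (F : ℝ → ℝ) : Prop where
  contDiff : ContDiff ℝ ∞ F
  eq_one : ∀ t ≤ 1, F t = 1
  eq_zero : ∀ t ≥ r, F t = 0
  mem_Icc : ∀ t, F t ∈ Icc 0 1
  deriv_mem_Icc : ∀ t, deriv F t ∈ Icc (-ε) 0
  abs_deriv_deriv_le : ∀ t, |deriv (deriv F) t| ≤ ε

lemma deriv_comp_mul_const_sub {f : ℝ → ℝ} (hf : Differentiable ℝ f) (κ r : ℝ) :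
    deriv (fun t => f (κ * (r - t))) = fun t => -κ * deriv f (κ * (r - t)) := by
  funext t
  have hu : HasDerivAt (fun t => κ * (r - t)) (-κ) t := by
    simpa using ((hasDerivAt_id t).const_sub r).const_mul κ
  exact ((hf _).hasDerivAt.comp t hu).deriv.trans (mul_comm _ _)

lemma exists_isCutoffProfile {ε : ℝ} (hε : 0 < ε) : ∃ r > 1, ∃ F, IsCutoffProfile ε r F := by
  obtain ⟨M, hM, hbound⟩ := smoothTransition.exists_abs_deriv_le
  set κ := min 1 (ε / M)
  have hκ : 0 < κ := by positivity
  have hκ1 : κ ≤ 1 := min_le_left _ _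
  have hκM : κ * M ≤ ε := (le_div_iff₀ hM).1 (min_le_right _ _)
  have hψ := smoothTransition.contDiff (n := ⊤)
  have hψ' : Differentiable ℝ (deriv smoothTransition) :=
    (contDiff_infty_iff_deriv.1 hψ).2.differentiable (by simp)
  set r := 1 + κ⁻¹
  refine ⟨r, by simp [r, hκ], fun t => smoothTransition (κ * (r - t)), ⟨?_, ?_, ?_, ?_, ?_, ?_⟩⟩
  · exact hψ.comp (contDiff_const.mul (contDiff_const.sub contDiff_id))
  · intro t ht
    refine smoothTransition.one_of_one_le ?_
    nlinarith [mul_inv_cancel₀ hκ.ne']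
  · intro t ht
    exact smoothTransition.zero_of_nonpos (mul_nonpos_of_nonneg_of_nonpos hκ.le (by linarith))
  · exact fun t => ⟨smoothTransition.nonneg _, smoothTransition.le_one _⟩
  · intro t
    rw [deriv_comp_mul_const_sub (hψ.differentiable (by simp))]
    have h₀ := smoothTransition.monotone.deriv_nonneg (x := κ * (r - t))
    have h₁ := (abs_le.1 (hbound (κ * (r - t))).1).2
    constructor <;> nlinarith
  · intro t
    simp only [deriv_comp_mul_const_sub (hψ.differentiable (by simp)), deriv_const_mul_field',
      deriv_comp_mul_const_sub hψ', abs_mul, abs_neg, abs_of_pos hκ]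
    calc κ * (κ * |deriv (deriv smoothTransition) (κ * (r - t))|) ≤ κ * (1 * M) := by
          gcongr; exact (hbound _).2
      _ ≤ ε := by simpa using hκM

/-- `warp (-1) = sinh`, `warp 1 = cosh`, `warp 0 = exp / 2`. -/
noncomputable def warp (G : ℝ → ℝ) (t : ℝ) : ℝ := (exp t + G t * exp (-t)) / 2

lemma contDiff_warp {n : WithTop ℕ∞} {G : ℝ → ℝ} (hG : ContDiff ℝ n G) : ContDiff ℝ n (warp G) :=
  ((contDiff_exp.add (hG.mul (contDiff_exp.comp contDiff_neg))).div_const 2)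

lemma deriv_warp {G : ℝ → ℝ} (hG : Differentiable ℝ G) : deriv (warp G) = warp (deriv G - G) := by
  funext t
  have h : HasDerivAt (warp G) _ t := ((hasDerivAt_exp t).add
    ((hG t).hasDerivAt.mul (hasDerivAt_neg t).exp)).div_const 2
  rw [h.deriv, warp]
  simp only [Pi.sub_apply]
  ring

lemma deriv_deriv_warp {G : ℝ → ℝ} (hG : ContDiff ℝ 2 G) :
    deriv (deriv (warp G)) = warp (fun t => deriv (deriv G) t - 2 * deriv G t + G t) := by
  obtain ⟨hG₁, -, hG₂⟩ := contDiff_succ_iff_deriv.1 (show ContDiff ℝ (1 + 1) G from hG)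
  rw [deriv_warp hG₁, deriv_warp ((hG₂.differentiable one_ne_zero).sub hG₁)]
  congr 1
  funext t
  simp only [Pi.sub_apply, deriv_sub (hG₂.differentiable one_ne_zero t) (hG₁ t)]
  ring

namespace IsCutoffProfile

variable {ε r : ℝ} {F : ℝ → ℝ} (hF : IsCutoffProfile ε r F)
include hF

lemma nonneg : 0 ≤ ε :=
  (abs_nonneg _).trans (hF.abs_deriv_deriv_le 0)

lemma deriv_eq_zero_of_le {t : ℝ} (ht : r ≤ t) : deriv F t = 0 :=
  IsLocalMin.deriv_eq_zero <| Eventually.of_forall fun u => by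
    simpa [hF.eq_zero t ht] using (hF.mem_Icc u).1

lemma warp_neg_eq_sinh {t : ℝ} (ht : t ≤ 1) : warp (-F) t = sinh t := by
  simp [warp, hF.eq_one t ht, sinh_eq, sub_eq_add_neg]

lemma warp_eq_cosh {t : ℝ} (ht : t ≤ 1) : warp F t = cosh t := by
  simp [warp, hF.eq_one t ht, cosh_eq]

lemma warp_neg_eventuallyEq_sinh {t : ℝ} (ht : t < 1) : warp (-F) =ᶠ[𝓝 t] sinh := by
  filter_upwards [Iio_mem_nhds ht] with u hu using hF.warp_neg_eq_sinh hu.le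

lemma warp_eventuallyEq_cosh {t : ℝ} (ht : t < 1) : warp F =ᶠ[𝓝 t] cosh := by
  filter_upwards [Iio_mem_nhds ht] with u hu using hF.warp_eq_cosh hu.le

lemma warp_eq_exp_div_two_of_le {t : ℝ} (ht : r ≤ t) :
    warp (-F) t = exp t / 2 ∧ warp F t = exp t / 2 ∧
      deriv (warp (-F)) t = warp (-F) t ∧ deriv (warp F) t = warp F t := by
  have hd := hF.contDiff.differentiable (by simp)
  simp [deriv_warp hd, deriv_warp hd.neg, warp, hF.eq_zero t ht, hF.deriv_eq_zero_of_le ht]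

lemma curvaturePinched_of_lt_one {t : ℝ} (ht₀ : 0 < t) (ht₁ : t < 1) :
    CurvaturePinched ε (warp (-F) t) (deriv (warp (-F)) t) (deriv (deriv (warp (-F))) t)
      (warp F t) (deriv (warp F) t) (deriv (deriv (warp F)) t) := by
  have hs := hF.warp_neg_eventuallyEq_sinh ht₁
  have hc := hF.warp_eventuallyEq_cosh ht₁
  rw [hs.eq_of_nhds, hc.eq_of_nhds, hs.deriv_eq, hc.deriv_eq, hs.deriv.deriv_eq,
    hc.deriv.deriv_eq]
  simp only [Real.deriv_sinh, Real.deriv_cosh]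
  exact curvaturePinched_sinh_cosh hF.nonneg ht₀

lemma curvaturePinched_of_one_le {t : ℝ} (hε1 : ε ≤ 1) (ht : 1 ≤ t) :
    CurvaturePinched ε (warp (-F) t) (deriv (warp (-F)) t) (deriv (deriv (warp (-F))) t)
      (warp F t) (deriv (warp F) t) (deriv (deriv (warp F)) t) := by
  have h₂ : ContDiff ℝ 2 F := hF.contDiff.of_le (by norm_cast)
  have hd := hF.contDiff.differentiable (by simp)
  have hexp : 4 * exp (-t) ≤ exp t := by
    have he : 2 ≤ exp t := by linarith [exp_one_gt_d9, exp_le_exp.2 ht]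
    rw [exp_neg, ← div_eq_mul_inv, div_le_iff₀ (exp_pos t)]
    nlinarith
  rw [deriv_deriv_warp h₂, deriv_deriv_warp (G := -F) h₂.neg, deriv_warp hd, deriv_warp hd.neg]
  refine curvaturePinched_of_four_mul_le hε1 (exp_pos _) hexp (hF.mem_Icc t)
    (hF.deriv_mem_Icc t) (hF.abs_deriv_deriv_le t) ?_ ?_ ?_ ?_ ?_ ?_ <;>
    simp only [warp, deriv.neg', deriv.fun_neg', Pi.sub_apply, Pi.neg_apply] <;> ring

lemma curvaturePinched {t : ℝ} (hε1 : ε ≤ 1) (ht : 0 < t) :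
    CurvaturePinched ε (warp (-F) t) (deriv (warp (-F)) t) (deriv (deriv (warp (-F))) t)
      (warp F t) (deriv (warp F) t) (deriv (deriv (warp F)) t) := by
  rcases lt_or_ge t 1 with ht₁ | ht₁
  · exact hF.curvaturePinched_of_lt_one ht ht₁
  · exact hF.curvaturePinched_of_one_le hε1 ht₁

end IsCutoffProfile

/-- Main analytic lemma of the cusp-closing construction: for every `0 < ε ≤ 1` there are
`r > 1` and smooth warping functions `s, c : ℝ → ℝ` with `s = sinh`, `c = cosh` on
`(-∞, 1]`, `s(t) = c(t) = e^t/2` (hence `s' = s`, `c' = c`) on `[r, ∞)`, the initial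
conditions `s(0) = 0`, `s'(0) = 1`, `c(0) = 1`, `c'(0) = 0`, and for all `t > 0`:
`s(t) > 0`, `c(t) > 0`, `0 ≤ s''(t) ≤ (1+ε)s(t)`, `0 ≤ c''(t) ≤ (1+ε)c(t)`,
`0 ≤ s'(t)c'(t) ≤ s(t)c(t)` and `c'(t)² ≤ c(t)²`. -/
theorem stmt_6 : ∀ ε : ℝ, 0 < ε → ε ≤ 1 →
    ∃ r : ℝ, 1 < r ∧ ∃ s c : ℝ → ℝ, ContDiff ℝ (⊤ : ℕ∞) s ∧ ContDiff ℝ (⊤ : ℕ∞) c ∧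
      (∀ t ≤ (1 : ℝ), s t = Real.sinh t ∧ c t = Real.cosh t) ∧
      (∀ t ≥ r, s t = Real.exp t / 2 ∧ c t = Real.exp t / 2 ∧
        deriv s t = s t ∧ deriv c t = c t) ∧
      s 0 = 0 ∧ deriv s 0 = 1 ∧ c 0 = 1 ∧ deriv c 0 = 0 ∧
      (∀ t > (0 : ℝ), 0 < s t ∧ 0 < c t ∧
        (0 ≤ deriv (deriv s) t ∧ deriv (deriv s) t ≤ (1 + ε) * s t) ∧
        (0 ≤ deriv (deriv c) t ∧ deriv (deriv c) t ≤ (1 + ε) * c t) ∧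
        (0 ≤ deriv s t * deriv c t ∧ deriv s t * deriv c t ≤ s t * c t) ∧
        (deriv c t) ^ 2 ≤ (c t) ^ 2) := by
  intro ε hε hε1
  obtain ⟨r, hr, F, hF⟩ := exists_isCutoffProfile hε
  refine ⟨r, hr, warp (-F), warp F, contDiff_warp hF.contDiff.neg, contDiff_warp hF.contDiff,
    fun t ht => ⟨hF.warp_neg_eq_sinh ht, hF.warp_eq_cosh ht⟩,
    fun t ht => hF.warp_eq_exp_div_two_of_le ht,
    ?_, ?_, ?_, ?_, fun t ht => hF.curvaturePinched hε1 ht⟩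
  · simpa using hF.warp_neg_eq_sinh zero_le_one
  · simp [(hF.warp_neg_eventuallyEq_sinh one_pos).deriv_eq]
  · simpa using hF.warp_eq_cosh zero_le_one
  · simp [(hF.warp_eventuallyEq_cosh one_pos).deriv_eq]
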